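/- arXiv:1407.4323 — 7 statements merged into one kernel-verified Lean document; each statement's English description precedes it below -/
import Mathlib

section
/- Let $k$ and $m$ be positive integers with $m \geq 3$. Then $2 \cdot k! \cdot m^k$ divides $(km)!$. -/
theorem statement_1 (k m : ℕ) (hk : 0 < k) (hm : 3 ≤ m) :
    2 * (Nat.factorial k * m ^ k) ∣ Nat.factorial (k * m) := by
  have h1 : Nat.factorial k * Nat.factorial m ^ k ∣ Nat.factorial (k * m) := by
    refine ⟨Nat.uniformBell k m, ?_⟩
    rw [← Nat.uniformBell_mul_eq k (by omega : m ≠ 0)]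
    ring
  have h2 : 2 * m ∣ Nat.factorial m := by
    have : m = (m - 2) + 2 := by omega
    calc 2 * m ∣ Nat.factorial 2 * m := by norm_num [Nat.factorial]
      _ ∣ Nat.factorial (m - 1) * m := by
        exact Nat.mul_dvd_mul_right (Nat.factorial_dvd_factorial (by omega)) m
      _ = Nat.factorial m := by
        rw [Nat.mul_comm, ← Nat.succ_pred_eq_of_pos (by omega : 0 < m)]
        rfl
  have h3 : 2 * (Nat.factorial k * m ^ k) ∣ Nat.factorial k * Nat.factorial m ^ k := by
    have : (2 * m) ^ k ∣ Nat.factorial m ^ k := pow_dvd_pow_of_dvd h2 k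
    have h4 : 2 * m ^ k ∣ (2 * m) ^ k := by
      rw [mul_pow]
      exact Nat.mul_dvd_mul_right (dvd_pow_self 2 (by omega)) _
    have := h4.trans this
    calc 2 * (Nat.factorial k * m ^ k) = Nat.factorial k * (2 * m ^ k) := by ring
      _ ∣ Nat.factorial k * Nat.factorial m ^ k := Nat.mul_dvd_mul_left _ this
  exact h3.trans h1
end

section
/- Let $n > 2$, let $p$ be a prime with $p \geq n-1$, and let $\delta \in S_n$ with $\delta \neq 1$. Then $p$ divides $|C_{S_n}(\delta)|$ if and only if $\delta$ is a single cycle of length $p$. -/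
/-!
A permutation `δ ≠ 1` whose centralizer has order divisible by `p` commutes with an element `σ`
of order `p`, by Cauchy. Since `n < 2p`, such a `σ` is a single `p`-cycle, fixing at most one
point. A permutation commuting with a cycle acts on its support as a power of it, and fixes the
(at most one) remaining point, so `δ` is a nontrivial power of `σ`, hence again of order `p` and
a `p`-cycle. Conversely, a `p`-cycle has order `p` and lies in its own centralizer.
-/

open Equiv Finset

namespace Equiv.Perm

variable {α : Type*} [Fintype α] [DecidableEq α]

theorem IsCycle.mem_zpowers_of_commute {σ τ : Perm α} (hσ : σ.IsCycle)
    (hsupp : Fintype.card α ≤ #σ.support + 1) (h : Commute τ σ) :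
    τ ∈ Subgroup.zpowers σ := by
  obtain ⟨hinv, hτ⟩ := hσ.commute_iff.mp h
  have hcompl : #σ.supportᶜ ≤ 1 := by
    rw [card_compl]
    omega
  suffices τ = ofSubtype (τ.subtypePerm hinv) by rwa [this]
  ext x
  by_cases hx : x ∈ σ.support
  · rw [ofSubtype_subtypePerm_of_mem hinv hx]
  · rw [ofSubtype_apply_of_not_mem _ hx]
    have hτx : τ x ∉ σ.support := fun h => hx ((hinv x).mp h)
    exact card_le_one.mp hcompl _ (mem_compl.mpr hτx) _ (mem_compl.mpr hx)

theorem cycleType_eq_singleton_of_orderOf_prime {σ : Perm α} {p : ℕ} (hp : p.Prime)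
    (hσ : orderOf σ = p) (hcard : Fintype.card α < 2 * p) : σ.cycleType = {p} := by
  have hcycle : σ.IsCycle := isCycle_of_prime_order' (hσ ▸ hp) (hσ ▸ hcard)
  rw [hcycle.cycleType, ← hcycle.orderOf, hσ]

end Equiv.Perm

open Equiv.Perm in
theorem statement_8_general (n p : ℕ) (hp : p.Prime) (hpn : n - 1 ≤ p)
    (δ : Equiv.Perm (Fin n)) (hδ : δ ≠ 1) :
    p ∣ Nat.card (Subgroup.centralizer {δ} : Subgroup (Equiv.Perm (Fin n))) ↔
      δ.cycleType = {p} := by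
  have hcard : Fintype.card (Fin n) < 2 * p := by
    rw [Fintype.card_fin]
    have := hp.two_le
    omega
  constructor
  · intro hdvd
    have : Fact p.Prime := ⟨hp⟩
    obtain ⟨⟨σ, hσδ⟩, hσ⟩ := exists_prime_orderOf_dvd_card' p hdvd
    rw [Subgroup.orderOf_mk] at hσ
    have hσcycle : σ.IsCycle := isCycle_of_prime_order' (hσ ▸ hp) (hσ ▸ hcard)
    have hσsupp : #σ.support = p := by rw [← hσcycle.orderOf, hσ]
    have hδσ : δ ∈ Subgroup.zpowers σ :=
      hσcycle.mem_zpowers_of_commute (by rw [Fintype.card_fin, hσsupp]; omega)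
        (Subgroup.mem_centralizer_singleton_iff.mp hσδ).symm
    have hδord : orderOf δ = p :=
      ((Nat.dvd_prime hp).mp (hσ ▸ orderOf_dvd_of_mem_zpowers hδσ)).resolve_left
        (orderOf_eq_one_iff.not.mpr hδ)
    exact cycleType_eq_singleton_of_orderOf_prime hp hδord hcard
  · intro hδcycle
    have hδord : orderOf δ = p := by simp [← lcm_cycleType, hδcycle]
    exact hδord ▸ Subgroup.orderOf_dvd_natCard _ (Subgroup.mem_centralizer_singleton_iff.mpr rfl)

theorem statement_8 (n p : ℕ) (hn : 2 < n) (hp : p.Prime) (hpn : n - 1 ≤ p)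
    (δ : Equiv.Perm (Fin n)) (hδ : δ ≠ 1) :
    p ∣ Nat.card (Subgroup.centralizer {δ} : Subgroup (Equiv.Perm (Fin n))) ↔
      δ.cycleType = {p} :=
  statement_8_general n p hp hpn δ hδ
end

section
/- Let $n \geq 9$, let $p$ be a prime with $p \geq n-2$, and let $\delta \in A_n$ with $\delta \neq 1$. Then $p$ divides $|C_{A_n}(\delta)|$ if and only if $\delta$ is a single cycle of length $p$. -/
open Equiv Equiv.Perm

/-- An even permutation with support of at most two points is trivial. -/
lemma aux_even_small_support {m : ℕ} (τ : Equiv.Perm (Fin m))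
    (hsign : Equiv.Perm.sign τ = 1) (hcard : τ.support.card ≤ 2) : τ = 1 := by
  by_contra hne
  have h0 : τ.support.card ≠ 0 := by
    simpa [Finset.card_eq_zero, Equiv.Perm.support_eq_empty_iff] using hne
  have h1 : τ.support.card ≠ 1 := Equiv.Perm.card_support_ne_one τ
  have h2 : τ.support.card = 2 := by omega
  obtain ⟨a, b, hab, rfl⟩ := Equiv.Perm.card_support_eq_two.mp h2
  rw [Equiv.Perm.sign_swap hab] at hsign
  exact absurd hsign (by decide)

/-- A permutation of order a prime `p` with fewer than `2p` points is a single `p`-cycle. -/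
lemma aux_cycleType_of_prime_order {m : ℕ} (σ : Equiv.Perm (Fin m)) {p : ℕ}
    (hp : p.Prime) (horder : orderOf σ = p) (hm : m < 2 * p) :
    σ.cycleType = {p} := by
  obtain ⟨k, hk⟩ := Equiv.Perm.cycleType_prime_order (horder ▸ hp)
  rw [horder] at hk
  have hsum : σ.cycleType.sum = σ.support.card := σ.sum_cycleType
  have hle : σ.support.card ≤ m := le_trans (Finset.card_le_univ _) (by simp)
  rw [hk, Multiset.sum_replicate, smul_eq_mul] at hsum
  have hppos : 0 < p := hp.pos
  have hk0 : k = 0 := by nlinarith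
  subst hk0
  simpa using hk

theorem statement_9 (n p : ℕ) (hn : 9 ≤ n) (hp : p.Prime) (hpn : n - 2 ≤ p)
    (δ : Equiv.Perm (Fin n)) (hδ : δ ∈ alternatingGroup (Fin n)) (hδ1 : δ ≠ 1) :
    p ∣ Nat.card (Subgroup.centralizer {(⟨δ, hδ⟩ : alternatingGroup (Fin n))} :
        Subgroup (alternatingGroup (Fin n))) ↔
      δ.cycleType = {p} := by
  have hp7 : 7 ≤ p := le_trans (by omega) hpn
  have hn2p : n < 2 * p := by omega
  have hpodd : Odd p := hp.odd_of_ne_two (by omega)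
  set H : Subgroup (alternatingGroup (Fin n)) :=
    Subgroup.centralizer {(⟨δ, hδ⟩ : alternatingGroup (Fin n))} with hH
  constructor
  · intro hdvd
    haveI : Fact p.Prime := ⟨hp⟩
    obtain ⟨g, hg⟩ := exists_prime_orderOf_dvd_card' p hdvd
    set σ : Equiv.Perm (Fin n) := ((g : alternatingGroup (Fin n)) : Equiv.Perm (Fin n)) with hσdef
    have hσord : orderOf σ = p := by
      rw [← hg]
      trans orderOf (g : alternatingGroup (Fin n))
      · exact orderOf_injective (alternatingGroup (Fin n)).subtype
          (alternatingGroup (Fin n)).subtype_injective _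
      · exact orderOf_injective H.subtype H.subtype_injective g
    -- σ is a p-cycle
    have hσct : σ.cycleType = {p} := aux_cycleType_of_prime_order σ hp hσord hn2p
    have hσcyc : σ.IsCycle := Equiv.Perm.card_cycleType_eq_one.mp (by rw [hσct]; rfl)
    have hσsupp : σ.support.card = p := by
      have := σ.sum_cycleType
      rw [hσct] at this
      simpa using this.symm
    -- δ commutes with σ
    have hcomm : Commute δ σ := by
      have h : (g : alternatingGroup (Fin n)) * ⟨δ, hδ⟩ = ⟨δ, hδ⟩ * (g : alternatingGroup (Fin n)) :=
        Subgroup.mem_centralizer_singleton_iff.mp g.2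
      have h3 := congrArg (Subtype.val) h
      simp only [Subgroup.coe_mul] at h3
      exact h3.symm
    obtain ⟨hc', hz⟩ := hσcyc.commute_iff.mp hcomm
    obtain ⟨k, hk⟩ := Subgroup.mem_zpowers_iff.mp hz
    set c : Equiv.Perm (Fin n) := σ ^ k with hcdef
    have hceq : ∀ x ∈ σ.support, c x = δ x := by
      intro x hx
      rw [hk]
      exact Equiv.Perm.ofSubtype_subtypePerm_of_mem hc' hx
    set τ : Equiv.Perm (Fin n) := c⁻¹ * δ with hτdef
    have hτsupp : τ.support ⊆ σ.supportᶜ := by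
      intro x hx
      rw [Finset.mem_compl]
      intro hxs
      rw [Equiv.Perm.mem_support] at hx
      apply hx
      rw [hτdef, Equiv.Perm.mul_apply, ← hceq x hxs]
      simp
    have hsignσ : Equiv.Perm.sign σ = 1 := by
      rw [Equiv.Perm.sign_of_cycleType, hσct]
      simp [Odd.add_one hpodd, Even.neg_one_pow]
    have hsignδ : Equiv.Perm.sign δ = 1 := Equiv.Perm.mem_alternatingGroup.mp hδ
    have hsignτ : Equiv.Perm.sign τ = 1 := by
      rw [hτdef, map_mul, map_inv, hcdef, map_zpow, hsignσ, hsignδ]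
      simp
    have hτcard : τ.support.card ≤ 2 := by
      calc τ.support.card ≤ σ.supportᶜ.card := Finset.card_le_card hτsupp
        _ = n - p := by rw [Finset.card_compl, hσsupp]; simp
        _ ≤ 2 := by omega
    have hτ1 : τ = 1 := aux_even_small_support τ hsignτ hτcard
    have hδc : δ = c := by
      have := congrArg (fun t => c * t) hτ1
      simpa [hτdef] using this
    -- δ is a nontrivial power of a p-cycle, hence has order p
    have hσp : σ ^ p = 1 := by rw [← hσord]; exact pow_orderOf_eq_one σ
    have hδp : δ ^ p = 1 := by
      rw [hδc, hcdef, ← zpow_natCast, ← zpow_mul, mul_comm, zpow_mul, zpow_natCast, hσp,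
        one_zpow]
    have hδord : orderOf δ = p := by
      have hdvd' : orderOf δ ∣ p := orderOf_dvd_of_pow_eq_one hδp
      rcases hp.eq_one_or_self_of_dvd _ hdvd' with h | h
      · exact absurd (orderOf_eq_one_iff.mp h) hδ1
      · exact h
    exact aux_cycleType_of_prime_order δ hp hδord hn2p
  · intro hct
    have hδord : orderOf δ = p := by
      rw [← Equiv.Perm.lcm_cycleType, hct]
      simp [Nat.lcm]
    set x : H := ⟨⟨δ, hδ⟩, Subgroup.mem_centralizer_singleton_iff.mpr rfl⟩ with hx
    have hxord : orderOf x = p := by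
      rw [← hδord]
      trans orderOf ((⟨δ, hδ⟩ : alternatingGroup (Fin n)))
      · exact (orderOf_injective H.subtype H.subtype_injective x).symm
      · exact (orderOf_injective (alternatingGroup (Fin n)).subtype
          (alternatingGroup (Fin n)).subtype_injective _).symm
    exact hxord ▸ orderOf_dvd_natCard x
end

section
/- Let $n \geq 9$, let $p$ be a prime with $p \geq n-1$, and let $\delta \in S_n$ be a cycle of length $p$. Then for every non-identity $\delta' \in S_n$ whose cycle type differs from that of $\delta$, the conjugacy class size $|\delta^{S_n}|$ neither divides nor is divisible by $|\delta'^{S_n}|$. In other words, $v_\delta$ is an isolated vertex of the divisibility graph $D(S_n)$. -/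
open Equiv Equiv.Perm MulAction Subgroup

/-- The size of the conjugacy class of `g` in `G`. -/
noncomputable def clSize {G : Type*} [Group G] (g : G) : ℕ := Nat.card {x : G // IsConj g x}

lemma clSize_mul_card_centralizer {G : Type*} [Group G] [Fintype G] (g : G) :
    clSize g * Nat.card (Subgroup.centralizer ({g} : Set G)) = Fintype.card G := by
  classical
  have h1 : clSize g = Nat.card (MulAction.orbit (ConjAct G) g) := by
    refine Nat.card_congr (Equiv.subtypeEquivRight fun x => ?_)
    rw [isConj_comm]
    exact (ConjAct.mem_orbit_conjAct).symm
  have h2 : Nat.card (Subgroup.centralizer ({g} : Set G))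
      = Nat.card (MulAction.stabilizer (ConjAct G) g) := by
    refine Nat.card_congr ⟨fun x => ⟨ConjAct.toConjAct x.1, ?_⟩,
      fun y => ⟨ConjAct.ofConjAct y.1, ?_⟩, fun x => rfl, fun y => rfl⟩
    · have hx := Subgroup.mem_centralizer_singleton_iff.mp x.2
      rw [MulAction.mem_stabilizer_iff, ConjAct.toConjAct_smul]
      rw [mul_inv_eq_iff_eq_mul, hx]
    · have hy := MulAction.mem_stabilizer_iff.mp y.2
      rw [Subgroup.mem_centralizer_singleton_iff]
      rw [ConjAct.smul_def, mul_inv_eq_iff_eq_mul] at hy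
      exact hy
  rw [h1, h2, Nat.card_eq_fintype_card, Nat.card_eq_fintype_card]
  exact MulAction.card_orbit_mul_card_stabilizer_eq_card_group (ConjAct G) g

lemma centralizer_eq_zpowers {n p : ℕ} (hpn : n - 1 ≤ p)
    (σ : Perm (Fin n)) (hσ : σ.cycleType = {p}) :
    Subgroup.centralizer ({σ} : Set (Perm (Fin n))) = Subgroup.zpowers σ := by
  have hcyc : σ.IsCycle := card_cycleType_eq_one.mp (by rw [hσ]; rfl)
  have hsupp : σ.support.card = p := by
    have := σ.sum_cycleType
    rw [hσ] at this
    simpa using this.symm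
  have hcompl : σ.supportᶜ.card ≤ 1 := by
    rw [Finset.card_compl, hsupp, Fintype.card_fin]
    omega
  have key : ∀ ρ : Perm (Fin n), Commute ρ σ → ∀ x, x ∈ σ.support → ρ x ∈ σ.support := by
    intro ρ hρ x hx
    rw [mem_support] at hx ⊢
    intro h
    apply hx
    have hc : ρ (σ x) = σ (ρ x) := by
      rw [← Perm.mul_apply, hρ.eq, Perm.mul_apply]
    rw [h] at hc
    exact ρ.injective hc
  apply le_antisymm
  · intro τ hτ
    have hτc : Commute τ σ := Subgroup.mem_centralizer_singleton_iff.mp hτ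
    have hfix : ∀ x, x ∉ σ.support → τ x = x := by
      intro x hx
      have h1 : τ x ∉ σ.support := by
        intro h
        exact hx (by simpa using key τ⁻¹ hτc.inv_left (τ x) h)
      exact Finset.card_le_one.mp hcompl (τ x) (Finset.mem_compl.mpr h1)
        x (Finset.mem_compl.mpr hx)
    obtain ⟨a, ha, hab⟩ := hcyc
    have haS : a ∈ σ.support := mem_support.mpr ha
    obtain ⟨k, hk⟩ := hab (mem_support.mp (key τ hτc a haS))
    rw [Subgroup.mem_zpowers_iff]
    refine ⟨k, Equiv.ext fun x => ?_⟩
    by_cases hx : x ∈ σ.support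
    · obtain ⟨m, hm⟩ := hab (mem_support.mp hx)
      have h1 : τ x = (σ ^ m) (τ a) := by
        rw [← hm, ← Perm.mul_apply, (hτc.zpow_right m).eq, Perm.mul_apply]
      rw [h1, ← hk, ← Perm.mul_apply, ← zpow_add, add_comm, zpow_add, Perm.mul_apply, hm]
    · rw [hfix x hx, zpow_apply_eq_self_of_apply_eq_self (Classical.not_not.mp
        (fun h => hx (mem_support.mpr h))) k]
  · exact Subgroup.zpowers_le.mpr (Subgroup.mem_centralizer_singleton_iff.mpr rfl)

lemma card_centralizer_eq {n p : ℕ} (hpn : n - 1 ≤ p)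
    (σ : Perm (Fin n)) (hσ : σ.cycleType = {p}) :
    Nat.card (Subgroup.centralizer ({σ} : Set (Perm (Fin n)))) = p := by
  rw [centralizer_eq_zpowers hpn σ hσ, Nat.card_zpowers, ← lcm_cycleType, hσ]
  simp

lemma not_dvd_card_centralizer {n p : ℕ} (hp : p.Prime) (hpn : n - 1 ≤ p) (hpn2 : n < 2 * p)
    (δ' : Perm (Fin n)) (h1 : δ' ≠ 1) (h2 : δ'.cycleType ≠ {p}) :
    ¬ p ∣ Nat.card (Subgroup.centralizer ({δ'} : Set (Perm (Fin n)))) := by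
  intro hdvd
  haveI : Fact p.Prime := ⟨hp⟩
  classical
  obtain ⟨σ, hσ⟩ := exists_prime_orderOf_dvd_card
    (G := Subgroup.centralizer ({δ'} : Set (Perm (Fin n)))) p
    (by rwa [← Nat.card_eq_fintype_card])
  set τ : Perm (Fin n) := (σ : Perm (Fin n)) with hτdef
  have hord : orderOf τ = p :=
    (orderOf_injective (Subgroup.subtype _) (Subgroup.subtype_injective _) σ).trans hσ
  have hcyc : τ.IsCycle := isCycle_of_prime_order' (hord ▸ hp)
    (by rw [hord, Fintype.card_fin]; exact hpn2)
  have hct : τ.cycleType = {p} := by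
    rw [hcyc.cycleType, ← hcyc.orderOf, hord]
  have hδ'c : δ' ∈ Subgroup.centralizer ({τ} : Set (Perm (Fin n))) :=
    Subgroup.mem_centralizer_singleton_iff.mpr
      (Subgroup.mem_centralizer_singleton_iff.mp σ.2).symm
  rw [centralizer_eq_zpowers hpn τ hct] at hδ'c
  obtain ⟨k, hk⟩ := Subgroup.mem_zpowers_iff.mp hδ'c
  have hδp : δ' ^ p = 1 := by
    rw [← hk, ← zpow_natCast, ← zpow_mul, mul_comm, zpow_mul, zpow_natCast, ← hord,
      pow_orderOf_eq_one, one_zpow]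
  have hordδ : orderOf δ' = p :=
    (hp.eq_one_or_self_of_dvd _ (orderOf_dvd_of_pow_eq_one hδp)).resolve_left
      (by simpa [orderOf_eq_one_iff] using h1)
  have hcyc' : δ'.IsCycle := isCycle_of_prime_order' (hordδ ▸ hp)
    (by rw [hordδ, Fintype.card_fin]; exact hpn2)
  exact h2 (by rw [hcyc'.cycleType, ← hcyc'.orderOf, hordδ])

theorem statement_11 (n p : ℕ) (hn : 9 ≤ n) (hp : p.Prime) (hpn : n - 1 ≤ p)
    (δ : Equiv.Perm (Fin n)) (hδ : δ.cycleType = {p}) :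
    ∀ δ' : Equiv.Perm (Fin n), δ' ≠ 1 → δ'.cycleType ≠ δ.cycleType →
      ¬ (clSize δ ∣ clSize δ') ∧ ¬ (clSize δ' ∣ clSize δ) := by
  classical
  have hple : p ≤ n := by
    have h1 : p ∈ δ.cycleType := by rw [hδ]; exact Multiset.mem_singleton_self p
    exact (le_card_support_of_mem_cycleType h1).trans
      (by simpa using δ.support.card_le_univ)
  have hpn2 : n < 2 * p := by omega
  have hN : Fintype.card (Perm (Fin n)) = (Nat.factorial n) := by
    rw [Fintype.card_perm, Fintype.card_fin]
  have hA : clSize δ * p = (Nat.factorial n) := by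
    have := clSize_mul_card_centralizer δ
    rwa [card_centralizer_eq hpn δ hδ, hN] at this
  have hp2 : ¬ p ^ 2 ∣ (Nat.factorial n) := by
    have hlog : Nat.log p n < 2 := by
      apply Nat.log_lt_of_lt_pow (by omega)
      calc n < 2 * p := hpn2
        _ ≤ p * p := by have := hp.two_le; exact Nat.mul_le_mul_right p this
        _ = p ^ 2 := (sq p).symm
    rw [Nat.Prime.pow_dvd_factorial_iff hp hlog]
    have hdiv : n / p = 1 := Nat.div_eq_of_lt_le (by omega) (by omega)
    simp [hdiv]
  have hpδ : ¬ p ∣ clSize δ := by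
    intro h
    exact hp2 (by rw [sq, ← hA]; exact mul_dvd_mul h dvd_rfl)
  have hclδpos : 0 < clSize δ := by
    rcases Nat.eq_zero_or_pos (clSize δ) with h | h
    · exfalso; have := hA; rw [h, zero_mul] at this; exact (Nat.factorial_pos n).ne' this.symm
    · exact h
  intro δ' h1 h2
  have h2' : δ'.cycleType ≠ {p} := by rw [← hδ]; exact h2
  have hB : clSize δ' * Nat.card (Subgroup.centralizer ({δ'} : Set (Perm (Fin n)))) = (Nat.factorial n) := by
    rw [← hN]; exact clSize_mul_card_centralizer δ'
  have hpz' : ¬ p ∣ Nat.card (Subgroup.centralizer ({δ'} : Set (Perm (Fin n)))) :=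
    not_dvd_card_centralizer hp hpn hpn2 δ' h1 h2'
  have hpδ' : p ∣ clSize δ' := by
    have hpN : p ∣ (Nat.factorial n) := Nat.dvd_factorial hp.pos hple
    rw [← hB] at hpN
    exact (hp.dvd_mul.mp hpN).resolve_right hpz'
  constructor
  · intro hdvd
    obtain ⟨t, ht⟩ := hdvd
    have heq : clSize δ * (t * Nat.card (Subgroup.centralizer ({δ'} : Set (Perm (Fin n))))) =
        clSize δ * p := by
      rw [← mul_assoc, ← ht, hB, hA]
    have htz := Nat.eq_of_mul_eq_mul_left hclδpos heq
    have hz'dvd : Nat.card (Subgroup.centralizer ({δ'} : Set (Perm (Fin n)))) ∣ p :=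
      Dvd.intro_left t htz
    rcases hp.eq_one_or_self_of_dvd _ hz'dvd with h | h
    · have hbot := Subgroup.eq_bot_of_card_eq _ h
      have : δ' ∈ Subgroup.centralizer ({δ'} : Set (Perm (Fin n))) :=
        Subgroup.mem_centralizer_singleton_iff.mpr rfl
      rw [hbot, Subgroup.mem_bot] at this
      exact h1 this
    · exact hpz' (h ▸ dvd_rfl)
  · intro hdvd
    exact hpδ (hpδ'.trans hdvd)
end

section
/- Let $n \geq 7$ and $2 \leq k \leq n/2$. Let $\delta \in S_n$ have cycle type $[1^{n-2k}, 2^k]$ (product of $k$ disjoint transpositions), let $\delta'$ have cycle type $[1^{n-2k}, 4^1, 2^{k-2}]$, and let $\tau$ be a transposition. Then $|C_{S_n}(\delta')|$ divides $|C_{S_n}(\delta)|$, and $|C_{S_n}(\delta')|$ divides $|C_{S_n}(\tau)|$; consequently $|\delta^{S_n}|$ divides $|\delta'^{S_n}|$ and $|\tau^{S_n}|$ divides $|\delta'^{S_n}|$. -/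
open Equiv Equiv.Perm Subgroup Finset Nat

section ConjugacyClass

variable {G : Type*} [Group G]

lemma clSize_mul_card_centralizer_s12 [Finite G] (g : G) :
    clSize g * Nat.card (centralizer {g}) = Nat.card G := by
  have hclass : clSize g = (MulAction.orbit (ConjAct G) g).ncard := by
    rw [← Nat.card_coe_set_eq]
    exact Nat.card_congr <| Equiv.subtypeEquivRight fun x => by
      rw [ConjAct.mem_orbit_conjAct, isConj_comm]
  rw [hclass, nat_card_centralizer_nat_card_stabilizer, ← MulAction.index_stabilizer, mul_comm,
    card_mul_index]
  rfl

lemma clSize_dvd_of_card_centralizer_dvd [Finite G] {a b : G}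
    (h : Nat.card (centralizer {a}) ∣ Nat.card (centralizer {b})) : clSize b ∣ clSize a := by
  obtain ⟨r, hr⟩ := h
  refine ⟨r, Nat.eq_of_mul_eq_mul_right (Nat.card_pos (α := centralizer {a})) ?_⟩
  rw [clSize_mul_card_centralizer_s12, ← clSize_mul_card_centralizer_s12 b, hr]
  ring

lemma centralizer_le_centralizer_mul {a b : G} (h : centralizer {b} ≤ centralizer {a}) :
    centralizer {b} ≤ centralizer {a * b} := fun x hx => by
  have ha := mem_centralizer_singleton_iff.mp (h hx)
  rw [mem_centralizer_singleton_iff] at hx ⊢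
  rw [← mul_assoc, ha, mul_assoc, hx, mul_assoc]

end ConjugacyClass

lemma Nat.factorial_sub_four_mul_four_dvd {m : ℕ} (hm : 4 ≤ m) :
    (m - 4)! * 4 ∣ (m - 2)! * 2 := by
  obtain ⟨j, rfl⟩ := Nat.exists_eq_add_of_le' hm
  obtain ⟨e, he⟩ := Nat.even_mul_succ_self (j + 1)
  refine ⟨e, ?_⟩
  rw [show j + 4 - 4 = j by omega, show j + 4 - 2 = j + 2 by omega, factorial_succ, factorial_succ]
  linear_combination (2 * j !) * he

namespace Equiv.Perm

variable {α : Type*} [Fintype α] [DecidableEq α]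

lemma card_centralizer_eq_of_cycleType_eq {g h : Perm α} (hgh : g.cycleType = h.cycleType) :
    Nat.card (centralizer {g}) = Nat.card (centralizer {h}) := by
  rw [nat_card_centralizer, nat_card_centralizer, hgh]

lemma IsCycle.card_centralizer {c : Perm α} (hc : c.IsCycle) :
    Nat.card (centralizer {c}) = (Fintype.card α - #c.support)! * #c.support := by
  simp [nat_card_centralizer, hc.cycleType]

lemma IsCycle.card_centralizer_dvd_of_isSwap {c τ : Perm α} (hc : c.IsCycle)
    (hc4 : #c.support = 4) (hτ : τ.IsSwap) :
    Nat.card (centralizer {c}) ∣ Nat.card (centralizer {τ}) := by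
  rw [hc.card_centralizer, hτ.isCycle.card_centralizer, hc4, card_support_eq_two.mpr hτ]
  exact factorial_sub_four_mul_four_dvd (hc4 ▸ card_le_univ c.support)

lemma eq_of_mem_cycleFactorsFinset_of_count_eq_one {g c d : Perm α}
    (hc : c ∈ g.cycleFactorsFinset) (hd : d ∈ g.cycleFactorsFinset)
    (hcount : g.cycleType.count #c.support = 1) (hcd : #d.support = #c.support) : d = c := by
  rw [CycleType.count_def] at hcount
  simpa using Fintype.card_le_one_iff.mp hcount.le ⟨⟨d, hd⟩, hcd⟩ ⟨⟨c, hc⟩, rfl⟩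

lemma centralizer_le_centralizer_of_count_eq_one {g c : Perm α}
    (hc : c ∈ g.cycleFactorsFinset) (hcount : g.cycleType.count #c.support = 1) :
    centralizer {g} ≤ centralizer {c} := fun x hx => by
  rw [mem_centralizer_singleton_iff] at hx ⊢
  have hg : x * g * x⁻¹ = g := by rw [mul_inv_eq_iff_eq_mul, hx]
  have hconj : x * c * x⁻¹ ∈ g.cycleFactorsFinset := by
    rw [← hg]; exact (mem_cycleFactorsFinset_conj g x c).mpr hc
  have := eq_of_mem_cycleFactorsFinset_of_count_eq_one hc hconj hcount card_support_conj
  rw [← mul_inv_eq_iff_eq_mul, this]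

lemma cycleType_mul_of_mem_cycleFactorsFinset {g c : Perm α} (hc : c ∈ g.cycleFactorsFinset) :
    (c * g).cycleType = g.cycleType - c.cycleType + (c ^ 2).cycleType := by
  have hdisj := disjoint_mul_inv_of_mem_cycleFactorsFinset hc
  have hsplit : c * g = g * c⁻¹ * c ^ 2 := by
    nth_rewrite 1 [← inv_mul_cancel_right g c]
    rw [← mul_assoc, ← hdisj.commute.eq, mul_assoc, sq]
  have hdisj2 : (g * c⁻¹).Disjoint (c ^ 2) := by simpa using hdisj.pow_disjoint_pow 1 2
  rw [hsplit, hdisj2.cycleType_mul, cycleType_mul_inv_mem_cycleFactorsFinset_eq_sub hc]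

lemma IsCycle.cycleType_sq_of_card_support_eq_four {c : Perm α} (hc : c.IsCycle)
    (hc4 : #c.support = 4) : (c ^ 2).cycleType = Multiset.replicate 2 2 := by
  have horder : orderOf (c ^ 2) = 2 := by
    rw [orderOf_pow, hc.orderOf, hc4]; rfl
  obtain ⟨t, ht⟩ := cycleType_prime_order (horder ▸ Nat.prime_two)
  have hsum : (c ^ 2).cycleType.sum = 4 := by
    rw [sum_cycleType, hc.support_pow_of_pos_of_lt_orderOf two_pos (by rw [hc.orderOf]; omega),
      hc4]
  rw [ht, horder, Multiset.sum_replicate, smul_eq_mul] at hsum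
  rw [ht, horder, show t + 1 = 2 by omega]

end Equiv.Perm

theorem statement_12_general (n k : ℕ) (hk : 2 ≤ k)
    (δ δ' τ : Equiv.Perm (Fin n))
    (hδ : δ.cycleType = Multiset.replicate k 2)
    (hδ' : δ'.cycleType = 4 ::ₘ Multiset.replicate (k - 2) 2)
    (hτ : τ.cycleType = {2}) :
    Nat.card (Subgroup.centralizer {δ'} : Subgroup (Equiv.Perm (Fin n))) ∣
      Nat.card (Subgroup.centralizer {δ} : Subgroup (Equiv.Perm (Fin n))) ∧
    Nat.card (Subgroup.centralizer {δ'} : Subgroup (Equiv.Perm (Fin n))) ∣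
      Nat.card (Subgroup.centralizer {τ} : Subgroup (Equiv.Perm (Fin n))) ∧
    clSize δ ∣ clSize δ' ∧ clSize τ ∣ clSize δ' := by
  obtain ⟨c, hc, hc4⟩ : ∃ c ∈ δ'.cycleFactorsFinset, #c.support = 4 := by
    have h4 : 4 ∈ δ'.cycleType := hδ' ▸ Multiset.mem_cons_self _ _
    simpa [cycleType_def] using h4
  have hcycle : c.IsCycle := (mem_cycleFactorsFinset_iff.mp hc).1
  have hcount : δ'.cycleType.count #c.support = 1 := by
    simp [hδ', hc4, Multiset.count_replicate]
  have hle := centralizer_le_centralizer_of_count_eq_one hc hcount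
  have hcδ' : (c * δ').cycleType = δ.cycleType := by
    rw [cycleType_mul_of_mem_cycleFactorsFinset hc, hcycle.cycleType_sq_of_card_support_eq_four hc4,
      hcycle.cycleType, hc4, hδ', hδ, Multiset.sub_singleton, Multiset.erase_cons_head,
      ← Multiset.replicate_add, Nat.sub_add_cancel hk]
  have hδ'δ : Nat.card (centralizer {δ'}) ∣ Nat.card (centralizer {δ}) :=
    card_centralizer_eq_of_cycleType_eq hcδ' ▸ card_dvd_of_le (centralizer_le_centralizer_mul hle)
  have hδ'τ : Nat.card (centralizer {δ'}) ∣ Nat.card (centralizer {τ}) :=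
    (card_dvd_of_le hle).trans
      (hcycle.card_centralizer_dvd_of_isSwap hc4 (isSwap_iff_cycleType.mpr hτ))
  exact ⟨hδ'δ, hδ'τ, clSize_dvd_of_card_centralizer_dvd hδ'δ,
    clSize_dvd_of_card_centralizer_dvd hδ'τ⟩

theorem statement_12 (n k : ℕ) (hn : 7 ≤ n) (hk : 2 ≤ k) (hkn : 2 * k ≤ n)
    (δ δ' τ : Equiv.Perm (Fin n))
    (hδ : δ.cycleType = Multiset.replicate k 2)
    (hδ' : δ'.cycleType = 4 ::ₘ Multiset.replicate (k - 2) 2)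
    (hτ : τ.cycleType = {2}) :
    Nat.card (Subgroup.centralizer {δ'} : Subgroup (Equiv.Perm (Fin n))) ∣
      Nat.card (Subgroup.centralizer {δ} : Subgroup (Equiv.Perm (Fin n))) ∧
    Nat.card (Subgroup.centralizer {δ'} : Subgroup (Equiv.Perm (Fin n))) ∣
      Nat.card (Subgroup.centralizer {τ} : Subgroup (Equiv.Perm (Fin n))) ∧
    clSize δ ∣ clSize δ' ∧ clSize τ ∣ clSize δ' :=
  statement_12_general n k hk δ δ' τ hδ hδ' hτ
end

section
/- Let $n \geq 9$ and let $\delta \in A_n$ be a non-identity permutation whose cycle decomposition contains exactly one $3$-cycle (i.e., in cycle type $[1^t, m_1^{k_1}, \dots, m_r^{k_r}]$ there is $j$ with $m_j = 3$, $k_j = 1$). Then $|C_{A_n}(\delta)|$ divides $|C_{A_n}((1\,2\,3))| = \tfrac{3(n-3)!}{2}$, and hence the conjugacy class size of $(1\,2\,3)$ in $A_n$ divides that of $\delta$. -/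
/-!
The 3-cycle `c` of `δ` is its only cycle factor of length 3. Conjugation by an element of the
centralizer of `δ` permutes the cycle factors of `δ` and preserves their lengths, so it fixes `c`:
`C(δ) ≤ C(c)`. In `Sₙ` the centralizer of a 3-cycle is `⟨c⟩ × Sym(n - 3)`, of order `3 (n - 3)!`,
and it contains a transposition of two fixed points of `c`, so it meets `Aₙ` in a subgroup of
index 2. Hence `|C_{Aₙ}(δ)|` divides `|C_{Aₙ}(c)| = |C_{Aₙ}(γ)| = 3 (n - 3)! / 2`, and the
orbit-stabilizer theorem turns this into the divisibility of the class sizes.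
-/

open Equiv Equiv.Perm Subgroup
open scoped Nat

namespace Subgroup

variable {G : Type*} [Group G]

lemma centralizer_singleton_eq_subgroupOf (H : Subgroup G) (g : H) :
    centralizer {g} = (centralizer {(g : G)}).subgroupOf H := by
  ext x
  simp only [mem_centralizer_singleton_iff, mem_subgroupOf, Subtype.ext_iff, coe_mul]

lemma centralizer_singleton_le_of_coe {H : Subgroup G} {g c : H}
    (h : centralizer {(g : G)} ≤ centralizer {(c : G)}) : centralizer {g} ≤ centralizer {c} := by
  simpa only [centralizer_singleton_eq_subgroupOf] using subgroupOf_mono H h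

lemma nat_card_subgroupOf (K H : Subgroup G) :
    Nat.card (K.subgroupOf H) = Nat.card (K ⊓ H : Subgroup G) := by
  rw [← inf_subgroupOf_right]
  exact Nat.card_congr (subgroupOfEquivOfLe inf_le_right).toEquiv

lemma nat_card_inf_mul_relIndex (H K : Subgroup G) :
    Nat.card (H ⊓ K : Subgroup G) * H.relIndex K = Nat.card K := by
  rw [← relIndex_bot_left, ← relIndex_bot_left, ← inf_relIndex_right H K]
  exact relIndex_mul_relIndex ⊥ (H ⊓ K) K bot_le inf_le_right

end Subgroup

section ConjClass

variable {G : Type*} [Group G]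

lemma clSize_mul_nat_card_centralizer (g : G) :
    clSize g * Nat.card (centralizer {g}) = Nat.card G := by
  have horbit : clSize g = Nat.card (MulAction.orbit (ConjAct G) g) :=
    Nat.card_congr <| Equiv.subtypeEquivRight fun x => by
      rw [isConj_comm, ConjAct.mem_orbit_conjAct]
  rw [horbit, nat_card_centralizer_nat_card_stabilizer, ← Nat.card_prod]
  exact Nat.card_congr (MulAction.orbitProdStabilizerEquivGroup (ConjAct G) g)

lemma clSize_dvd_clSize_of_nat_card_centralizer_dvd [Finite G] {g h : G}
    (hdvd : Nat.card (centralizer {h}) ∣ Nat.card (centralizer {g})) :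
    clSize g ∣ clSize h := by
  obtain ⟨d, hd⟩ := hdvd
  refine ⟨d, Nat.eq_of_mul_eq_mul_right (Nat.card_pos (α := centralizer {h})) ?_⟩
  rw [clSize_mul_nat_card_centralizer, ← clSize_mul_nat_card_centralizer g, hd]
  ring

end ConjClass

namespace Equiv.Perm

variable {α : Type*} [DecidableEq α] [Fintype α]

lemma relIndex_alternatingGroup_eq_two {H : Subgroup (Perm α)} {σ : Perm α} (hσH : σ ∈ H)
    (hσ : sign σ = -1) : (alternatingGroup α).relIndex H = 2 := by
  refine relIndex_eq_two_iff_exists_notMem_and.mpr ⟨σ, hσH, by simp [mem_alternatingGroup, hσ], ?_⟩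
  intro τ _
  rcases Int.units_eq_one_or (sign τ) with h | h <;> simp [mem_alternatingGroup, h, hσ]

lemma nat_card_centralizer_of_cycleType_eq_singleton {g : Perm α} {k : ℕ}
    (hg : g.cycleType = {k}) : Nat.card (centralizer {g}) = k * (Fintype.card α - k)! := by
  rw [nat_card_centralizer, hg]
  simp [mul_comm]

lemma two_mul_nat_card_centralizer_inf_alternatingGroup {g : Perm α} {k : ℕ}
    (hg : g.cycleType = {k}) (hk : k + 2 ≤ Fintype.card α) :
    2 * Nat.card (centralizer {g} ⊓ alternatingGroup α : Subgroup (Perm α)) =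
      k * (Fintype.card α - k)! := by
  have hsupp : g.support.card = k := by rw [← sum_cycleType, hg, Multiset.sum_singleton]
  obtain ⟨a, ha, b, hb, hab⟩ : ∃ a ∈ g.supportᶜ, ∃ b ∈ g.supportᶜ, a ≠ b :=
    Finset.one_lt_card.mp (by rw [Finset.card_compl]; omega)
  have hswap : swap a b ∈ centralizer {g} := by
    rw [mem_centralizer_singleton_iff]
    refine (Disjoint.commute ?_).eq
    rw [disjoint_iff_disjoint_support, support_swap hab, Finset.disjoint_left]
    intro x hx
    simp only [Finset.mem_compl] at ha hb
    rcases Finset.mem_insert.mp hx with rfl | hx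
    · exact ha
    · rwa [Finset.mem_singleton.mp hx]
  rw [← nat_card_centralizer_of_cycleType_eq_singleton hg,
    ← nat_card_inf_mul_relIndex (alternatingGroup α) (centralizer {g}),
    relIndex_alternatingGroup_eq_two hswap (sign_swap hab), inf_comm, mul_comm]

lemma exists_mem_cycleFactorsFinset_card_support_eq {g : Perm α} {k : ℕ}
    (hk : k ∈ g.cycleType) : ∃ c ∈ g.cycleFactorsFinset, c.support.card = k := by
  simpa [cycleType_def] using hk

lemma eq_of_mem_cycleFactorsFinset_of_count_cycleType_eq_one {g c d : Perm α} {k : ℕ}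
    (hk : g.cycleType.count k = 1) (hc : c ∈ g.cycleFactorsFinset) (hck : c.support.card = k)
    (hd : d ∈ g.cycleFactorsFinset) (hdk : d.support.card = k) : c = d := by
  rw [cycleType_def, Multiset.count_map, Multiset.card_eq_one] at hk
  obtain ⟨e, he⟩ := hk
  have eq_e {x : Perm α} (hx : x ∈ g.cycleFactorsFinset) (hxk : x.support.card = k) :
      x = e := by
    rw [← Multiset.mem_singleton, ← he, Multiset.mem_filter]
    exact ⟨hx, by simp [hxk]⟩
  rw [eq_e hc hck, eq_e hd hdk]

lemma centralizer_le_centralizer_of_count_cycleType_eq_one {g c : Perm α} {k : ℕ}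
    (hk : g.cycleType.count k = 1) (hc : c ∈ g.cycleFactorsFinset) (hck : c.support.card = k) :
    centralizer {g} ≤ centralizer {c} := by
  intro x hx
  have hconj : x * c * x⁻¹ = c := by
    refine eq_of_mem_cycleFactorsFinset_of_count_cycleType_eq_one hk ?_
      (by rw [card_support_conj, hck]) hc hck
    simpa only [ConjAct.toConjAct_smul] using
      OnCycleFactors.Subgroup.Centralizer.toConjAct_smul_mem_cycleFactorsFinset hx hc
  exact mem_centralizer_singleton_iff.mpr (mul_inv_eq_iff_eq_mul.mp hconj)

lemma two_mul_nat_card_centralizer_alternatingGroup {g : alternatingGroup α} {k : ℕ}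
    (hg : (g : Perm α).cycleType = {k}) (hk : k + 2 ≤ Fintype.card α) :
    2 * Nat.card (centralizer {g}) = k * (Fintype.card α - k)! := by
  rw [centralizer_singleton_eq_subgroupOf, nat_card_subgroupOf]
  exact two_mul_nat_card_centralizer_inf_alternatingGroup hg hk

end Equiv.Perm

theorem statement_15_general (n : ℕ) (hn : 9 ≤ n) (δ : Equiv.Perm (Fin n))
    (hδA : δ ∈ alternatingGroup (Fin n))
    (h3 : Multiset.count 3 δ.cycleType = 1)
    (γ : Equiv.Perm (Fin n)) (hγA : γ ∈ alternatingGroup (Fin n))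
    (hγ : γ.cycleType = {3}) :
    2 * Nat.card (Subgroup.centralizer {(⟨γ, hγA⟩ : alternatingGroup (Fin n))} :
        Subgroup (alternatingGroup (Fin n))) = 3 * Nat.factorial (n - 3) ∧
    Nat.card (Subgroup.centralizer {(⟨δ, hδA⟩ : alternatingGroup (Fin n))} :
        Subgroup (alternatingGroup (Fin n))) ∣
      Nat.card (Subgroup.centralizer {(⟨γ, hγA⟩ : alternatingGroup (Fin n))} :
        Subgroup (alternatingGroup (Fin n))) ∧
    clSize (⟨γ, hγA⟩ : alternatingGroup (Fin n)) ∣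
      clSize (⟨δ, hδA⟩ : alternatingGroup (Fin n)) := by
  have h5 : 3 + 2 ≤ Fintype.card (Fin n) := by rw [Fintype.card_fin]; omega
  obtain ⟨c, hc, hc_card⟩ :=
    exists_mem_cycleFactorsFinset_card_support_eq (Multiset.one_le_count_iff_mem.mp h3.ge)
  have hc_three : c.IsThreeCycle := card_support_eq_three_iff.mp hc_card
  have hδc : centralizer {(⟨δ, hδA⟩ : alternatingGroup (Fin n))} ≤
      centralizer {(⟨c, hc_three.mem_alternatingGroup⟩ : alternatingGroup (Fin n))} :=
    centralizer_singleton_le_of_coe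
      (centralizer_le_centralizer_of_count_cycleType_eq_one h3 hc hc_card)
  have hγ_cent := two_mul_nat_card_centralizer_alternatingGroup (g := ⟨γ, hγA⟩) hγ h5
  have hc_cent := two_mul_nat_card_centralizer_alternatingGroup
    (g := ⟨c, hc_three.mem_alternatingGroup⟩) hc_three h5
  have hdvd := card_dvd_of_le hδc
  rw [Nat.eq_of_mul_eq_mul_left two_pos (hc_cent.trans hγ_cent.symm)] at hdvd
  exact ⟨by rw [hγ_cent, Fintype.card_fin], hdvd, clSize_dvd_clSize_of_nat_card_centralizer_dvd hdvd⟩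

theorem statement_15 (n : ℕ) (hn : 9 ≤ n) (δ : Equiv.Perm (Fin n))
    (hδA : δ ∈ alternatingGroup (Fin n)) (hδ1 : δ ≠ 1)
    (h3 : Multiset.count 3 δ.cycleType = 1)
    (γ : Equiv.Perm (Fin n)) (hγA : γ ∈ alternatingGroup (Fin n))
    (hγ : γ.cycleType = {3}) :
    2 * Nat.card (Subgroup.centralizer {(⟨γ, hγA⟩ : alternatingGroup (Fin n))} :
        Subgroup (alternatingGroup (Fin n))) = 3 * Nat.factorial (n - 3) ∧
    Nat.card (Subgroup.centralizer {(⟨δ, hδA⟩ : alternatingGroup (Fin n))} :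
        Subgroup (alternatingGroup (Fin n))) ∣
      Nat.card (Subgroup.centralizer {(⟨γ, hγA⟩ : alternatingGroup (Fin n))} :
        Subgroup (alternatingGroup (Fin n))) ∧
    clSize (⟨γ, hγA⟩ : alternatingGroup (Fin n)) ∣
      clSize (⟨δ, hδA⟩ : alternatingGroup (Fin n)) :=
  statement_15_general n hn δ hδA h3 γ hγA hγ
end

section
/- Let $n \geq 9$ and let $\delta \in A_n$ be a non-identity permutation fixing at least $3$ points and having no cycle of length $3$ in its cycle decomposition. Let $\delta' = (\alpha\,\beta\,\gamma)\delta$ where $\alpha, \beta, \gamma$ are points fixed by $\delta$. Then $|C_{A_n}(\delta')|$ divides $|C_{A_n}(\delta)|$, so $|\delta^{A_n}|$ divides $|\delta'^{A_n}|$, and $|(1\,2\,3)^{A_n}|$ divides $|\delta'^{A_n}|$; hence there is a path of length two in $D(A_n)$ between $v_\delta$ and the $3$-cycle vertex. -/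
section ClassSize

variable {G : Type*} [Group G]

lemma clSize_eq_of_isConj {a b : G} (h : IsConj a b) : clSize a = clSize b :=
  Nat.card_congr (Equiv.subtypeEquivRight fun _ => ⟨h.symm.trans, h.trans⟩)

lemma clSize_eq_index_centralizer (g : G) :
    clSize g = (Subgroup.centralizer {g} : Subgroup G).index :=
  calc clSize g = Nat.card (MulAction.orbit (ConjAct G) g) :=
        Nat.card_congr (Equiv.subtypeEquivRight fun _ => by
          rw [ConjAct.mem_orbit_conjAct, isConj_comm])
    _ = Nat.card (ConjAct G ⧸ MulAction.stabilizer (ConjAct G) g) :=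
        Nat.card_congr (MulAction.orbitEquivQuotientStabilizer _ g)
    _ = (Subgroup.centralizer {g} : Subgroup G).index := by
        rw [ConjAct.stabilizer_eq_centralizer]; rfl

lemma clSize_dvd_clSize_of_centralizer_le {a b : G}
    (h : Subgroup.centralizer {b} ≤ Subgroup.centralizer {a}) : clSize a ∣ clSize b := by
  rw [clSize_eq_index_centralizer, clSize_eq_index_centralizer]
  exact Subgroup.index_dvd_of_le h

lemma Subgroup.centralizer_singleton_le_of_forall_commute {H : Subgroup G} {x y : H}
    (h : ∀ g ∈ H, Commute g (x : G) → Commute g (y : G)) :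
    Subgroup.centralizer {x} ≤ Subgroup.centralizer {y} := by
  intro g hg
  rw [Subgroup.mem_centralizer_singleton_iff] at hg ⊢
  exact Subtype.ext (h g g.2 (congrArg Subtype.val hg))

end ClassSize

namespace Equiv.Perm

variable {α : Type*} [DecidableEq α] [Fintype α]

lemma commute_of_mem_cycleFactorsFinset_of_count_eq_one {f g σ : Perm α}
    (hσ : σ ∈ f.cycleFactorsFinset) (hcount : f.cycleType.count σ.support.card = 1)
    (hg : Commute g f) : Commute g σ := by
  -- conjugation by `g` permutes the cycles of `f` and preserves their lengths
  have hσ' : g * σ * g⁻¹ ∈ f.cycleFactorsFinset := by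
    rwa [← hg.mul_inv_cancel, mem_cycleFactorsFinset_conj]
  rw [CycleType.count_def, Fintype.card_eq_one_iff] at hcount
  obtain ⟨c, hc⟩ := hcount
  have hconj : g * σ * g⁻¹ = σ :=
    congrArg (fun x => x.1.1)
      ((hc ⟨⟨_, hσ'⟩, card_support_conj⟩).trans (hc ⟨⟨_, hσ⟩, rfl⟩).symm)
  exact mul_inv_eq_iff_eq_mul.mp hconj

lemma IsCycle.commute_of_commute_mul {g σ τ : Perm α} (hσ : σ.IsCycle) (hστ : σ.Disjoint τ)
    (hτ : σ.support.card ∉ τ.cycleType) (hg : Commute g (σ * τ)) :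
    Commute g σ ∧ Commute g τ := by
  have hmem : σ ∈ (σ * τ).cycleFactorsFinset := by
    rw [hστ.cycleFactorsFinset_mul_eq_union, hσ.cycleFactorsFinset_eq_singleton]
    exact Finset.mem_union_left _ (Finset.mem_singleton_self σ)
  have hcount : (σ * τ).cycleType.count σ.support.card = 1 := by
    rw [hστ.cycleType_mul, hσ.cycleType, Multiset.count_add, Multiset.count_singleton_self,
      Multiset.count_eq_zero_of_notMem hτ]
  have hgσ := commute_of_mem_cycleFactorsFinset_of_count_eq_one hmem hcount hg
  refine ⟨hgσ, ?_⟩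
  -- `τ = σ⁻¹ * (σ * τ)`
  simpa using hgσ.inv_right.mul_right hg

lemma disjoint_swap_mul_swap {f : Perm α} {a b c : α}
    (hab : a ≠ b) (hbc : b ≠ c) (hac : a ≠ c) (ha : f a = a) (hb : f b = b) (hc : f c = c) :
    (swap a b * swap b c).Disjoint f := by
  rw [disjoint_iff_disjoint_support, support_swap_mul_swap (by simp [hab, hbc, hac])]
  simp [Finset.disjoint_left, ha, hb, hc]

lemma isThreeCycle_swap_mul_swap {a b c : α} (hab : a ≠ b) (hbc : b ≠ c) (hac : a ≠ c) :
    (swap a b * swap b c).IsThreeCycle := by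
  rw [← card_support_eq_three_iff, support_swap_mul_swap (by simp [hab, hbc, hac])]
  simp [hab, hbc, hac]

end Equiv.Perm

theorem statement_16_general (n : ℕ) (hn : 9 ≤ n) (δ δ' : Equiv.Perm (Fin n))
    (hδA : δ ∈ alternatingGroup (Fin n))
    (h3 : 3 ∉ δ.cycleType)
    (α β γ : Fin n) (hab : α ≠ β) (hbc : β ≠ γ) (hac : α ≠ γ)
    (hα : δ α = α) (hβ : δ β = β) (hγ : δ γ = γ)
    (hδ'def : δ' = Equiv.swap α β * Equiv.swap β γ * δ)
    (hδ'A : δ' ∈ alternatingGroup (Fin n))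
    (c : Equiv.Perm (Fin n)) (hcA : c ∈ alternatingGroup (Fin n))
    (hc : c.cycleType = {3}) :
    Nat.card (Subgroup.centralizer {(⟨δ', hδ'A⟩ : alternatingGroup (Fin n))} :
        Subgroup (alternatingGroup (Fin n))) ∣
      Nat.card (Subgroup.centralizer {(⟨δ, hδA⟩ : alternatingGroup (Fin n))} :
        Subgroup (alternatingGroup (Fin n))) ∧
    clSize (⟨δ, hδA⟩ : alternatingGroup (Fin n)) ∣
      clSize (⟨δ', hδ'A⟩ : alternatingGroup (Fin n)) ∧
    clSize (⟨c, hcA⟩ : alternatingGroup (Fin n)) ∣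
      clSize (⟨δ', hδ'A⟩ : alternatingGroup (Fin n)) := by
  set c₀ := Equiv.swap α β * Equiv.swap β γ
  have hc₀ : c₀.IsThreeCycle := Equiv.Perm.isThreeCycle_swap_mul_swap hab hbc hac
  have hc₀A : c₀ ∈ alternatingGroup (Fin n) := hc₀.mem_alternatingGroup
  have key (g : Equiv.Perm (Fin n)) (hg : Commute g δ') : Commute g c₀ ∧ Commute g δ :=
    hc₀.isCycle.commute_of_commute_mul (Equiv.Perm.disjoint_swap_mul_swap hab hbc hac hα hβ hγ)
      (by rwa [hc₀.card_support]) (hδ'def ▸ hg)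
  have hCδ : Subgroup.centralizer {(⟨δ', hδ'A⟩ : alternatingGroup (Fin n))} ≤
      Subgroup.centralizer {⟨δ, hδA⟩} :=
    Subgroup.centralizer_singleton_le_of_forall_commute fun g _ hg => (key g hg).2
  have hCc₀ : Subgroup.centralizer {(⟨δ', hδ'A⟩ : alternatingGroup (Fin n))} ≤
      Subgroup.centralizer {⟨c₀, hc₀A⟩} :=
    Subgroup.centralizer_singleton_le_of_forall_commute fun g _ hg => (key g hg).1
  have hcc₀ : IsConj (⟨c, hcA⟩ : alternatingGroup (Fin n)) ⟨c₀, hc₀A⟩ :=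
    alternatingGroup.isThreeCycle_isConj (by rw [Nat.card_fin]; omega) hc hc₀
  refine ⟨Subgroup.card_dvd_of_le hCδ, clSize_dvd_clSize_of_centralizer_le hCδ, ?_⟩
  rw [clSize_eq_of_isConj hcc₀]
  exact clSize_dvd_clSize_of_centralizer_le hCc₀

theorem statement_16 (n : ℕ) (hn : 9 ≤ n) (δ δ' : Equiv.Perm (Fin n))
    (hδA : δ ∈ alternatingGroup (Fin n)) (hδ1 : δ ≠ 1)
    (h3 : 3 ∉ δ.cycleType)
    (α β γ : Fin n) (hab : α ≠ β) (hbc : β ≠ γ) (hac : α ≠ γ)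
    (hα : δ α = α) (hβ : δ β = β) (hγ : δ γ = γ)
    (hδ'def : δ' = Equiv.swap α β * Equiv.swap β γ * δ)
    (hδ'A : δ' ∈ alternatingGroup (Fin n))
    (c : Equiv.Perm (Fin n)) (hcA : c ∈ alternatingGroup (Fin n))
    (hc : c.cycleType = {3}) :
    Nat.card (Subgroup.centralizer {(⟨δ', hδ'A⟩ : alternatingGroup (Fin n))} :
        Subgroup (alternatingGroup (Fin n))) ∣
      Nat.card (Subgroup.centralizer {(⟨δ, hδA⟩ : alternatingGroup (Fin n))} :
        Subgroup (alternatingGroup (Fin n))) ∧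
    clSize (⟨δ, hδA⟩ : alternatingGroup (Fin n)) ∣
      clSize (⟨δ', hδ'A⟩ : alternatingGroup (Fin n)) ∧
    clSize (⟨c, hcA⟩ : alternatingGroup (Fin n)) ∣
      clSize (⟨δ', hδ'A⟩ : alternatingGroup (Fin n)) :=
  statement_16_general n hn δ δ' hδA h3 α β γ hab hbc hac hα hβ hγ hδ'def hδ'A c hcA hc
end
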